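/- Suppose the matrix A ∈ ℝ^{m×n} satisfies the ℓ2 group robust null space property of order k with constants ρ ∈ (0,1) and τ ≥ 0. Let x ∈ ℝⁿ, let y = Ax + η with ‖η‖₂ ≤ ε, and let x̂ be any minimizer of ‖z‖₁ over z ∈ ℝⁿ subject to ‖Az − y‖₂ ≤ ε. Then for every p ∈ [1,2], the residual h = x̂ − x satisfies ‖h‖_p ≤ (2/(1−ρ))·{ [ρ/k^{1−1/p} + (1+ρ)]·σ_{k,𝒢}(x,‖·‖₁) + (1/k^{1−1/p} + 2)·τε }. -/

import Mathlib

/-!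
Let `Λ` be a group `k`-sparse set attaining `σ = σ_{k,𝒢}(x, ‖·‖₁)` and `h = x̂ - x`.
Minimality of `‖x̂‖₁` gives the cone condition `‖h_{Λᶜ}‖₁ ≤ ‖h_Λ‖₁ + 2σ`, and since `x` is
feasible too, `‖Ah‖₂ ≤ 2ε`. Cauchy–Schwarz `‖h_Λ‖₁ ≤ √k ‖h_Λ‖₂` combined with the null space
property yields `(1 - ρ) ‖h_{Λᶜ}‖₁ ≤ 2σ + τ ‖Ah‖₂`. Finally
`‖h‖_p ≤ ‖h_Λ‖_p + ‖h_{Λᶜ}‖₁`, and Hölder's `‖h_Λ‖_p ≤ k^{1/p - 1/2} ‖h_Λ‖₂` with the null space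
property once more bounds the first term by `(ρ ‖h_{Λᶜ}‖₁ + τ ‖Ah‖₂) / k^{1 - 1/p}`.
-/

open Finset

noncomputable section

namespace CS

/-- The ℓ1 norm of a vector. -/
def l1 {d : ℕ} (x : Fin d → ℝ) : ℝ := ∑ i, |x i|

/-- The ℓ2 (Euclidean) norm of a vector. -/
def l2 {d : ℕ} (x : Fin d → ℝ) : ℝ := Real.sqrt (∑ i, (x i) ^ 2)

/-- The ℓp norm of a vector (for real p ≥ 1). -/
def lpnorm {d : ℕ} (p : ℝ) (x : Fin d → ℝ) : ℝ := (∑ i, |x i| ^ p) ^ (1 / p)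

/-- `restrict Λ x` agrees with `x` on `Λ` and is zero elsewhere. -/
def restrict {d : ℕ} (Λ : Finset (Fin d)) (x : Fin d → ℝ) : Fin d → ℝ :=
  fun i => if i ∈ Λ then x i else 0

/-- The support of a vector. -/
def supp {d : ℕ} (x : Fin d → ℝ) : Finset (Fin d) :=
  Finset.univ.filter fun i => x i ≠ 0

/-- `G : Fin g → Finset (Fin n)` is a partition of `{1,…,n}` into `g` (nonempty,
pairwise disjoint) groups covering everything. -/
def IsPartition {n g : ℕ} (G : Fin g → Finset (Fin n)) : Prop :=
  (∀ j, (G j).Nonempty) ∧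
  (∀ j j', j ≠ j' → Disjoint (G j) (G j')) ∧
  Finset.univ.biUnion G = Finset.univ

/-- A subset `Λ ⊆ {1,…,n}` is group `k`-sparse: it is a union of groups and has
cardinality at most `k`. -/
def GroupSparseSet {n g : ℕ} (G : Fin g → Finset (Fin n)) (k : ℕ)
    (Λ : Finset (Fin n)) : Prop :=
  (∃ S : Finset (Fin g), Λ = S.biUnion G) ∧ Λ.card ≤ k

/-- A vector is group `l`-sparse: its support is contained in a union of groups
of total cardinality at most `l`. -/
def GroupSparseVec {n g : ℕ} (G : Fin g → Finset (Fin n)) (l : ℕ)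
    (z : Fin n → ℝ) : Prop :=
  ∃ S : Finset (Fin g), supp z ⊆ S.biUnion G ∧ (S.biUnion G).card ≤ l

/-- The group restricted isometry property of order `l` with constant `δ`. -/
def GRIP {m n g : ℕ} (A : Matrix (Fin m) (Fin n) ℝ) (G : Fin g → Finset (Fin n))
    (l : ℕ) (δ : ℝ) : Prop :=
  ∀ z : Fin n → ℝ, GroupSparseVec G l z →
    (1 - δ) * (l2 z) ^ 2 ≤ (l2 (A.mulVec z)) ^ 2 ∧
    (l2 (A.mulVec z)) ^ 2 ≤ (1 + δ) * (l2 z) ^ 2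

/-- The ℓ2 group robust null space property of order `k`
with constants `ρ`, `τ`. -/
def GRNSP {m n g : ℕ} (A : Matrix (Fin m) (Fin n) ℝ) (G : Fin g → Finset (Fin n))
    (k : ℕ) (ρ τ : ℝ) : Prop :=
  ∀ (h : Fin n → ℝ) (Λ : Finset (Fin n)), GroupSparseSet G k Λ →
    l2 (restrict Λ h) ≤
      ρ / Real.sqrt k * l1 (restrict Λᶜ h) + τ / Real.sqrt k * l2 (A.mulVec h)

/-- The group `k`-sparsity index of `x` with respect to the ℓ1 norm:
`σ_{k,𝒢}(x, ‖·‖₁) = min_{Λ ∈ GkS} ‖x − x_Λ‖₁ = min_{Λ ∈ GkS} ‖x_{Λᶜ}‖₁`. -/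
def gIndex {n g : ℕ} (G : Fin g → Finset (Fin n)) (k : ℕ) (x : Fin n → ℝ) : ℝ :=
  sInf {r | ∃ Λ : Finset (Fin n), GroupSparseSet G k Λ ∧ r = l1 (restrict Λᶜ x)}

/-- The (conventional) restricted isometry property of order `l`
with constant `δ`. -/
def RIP {m n : ℕ} (A : Matrix (Fin m) (Fin n) ℝ) (l : ℕ) (δ : ℝ) : Prop :=
  ∀ u : Fin n → ℝ, (supp u).card ≤ l →
    (1 - δ) * (l2 u) ^ 2 ≤ (l2 (A.mulVec u)) ^ 2 ∧
    (l2 (A.mulVec u)) ^ 2 ≤ (1 + δ) * (l2 u) ^ 2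

/-- The (conventional) `k`-sparsity index
`σ_k(x, ‖·‖₁) = min_{z k-sparse} ‖x − z‖₁`. -/
def sIndex {n : ℕ} (k : ℕ) (x : Fin n → ℝ) : ℝ :=
  sInf {r | ∃ z : Fin n → ℝ, (supp z).card ≤ k ∧ r = l1 (x - z)}

/-- The group support of `v`: the set of groups on which `v` is nonzero. -/
def Gsupp {n g : ℕ} (G : Fin g → Finset (Fin n)) (v : Fin n → ℝ) :
    Finset (Fin g) :=
  Finset.univ.filter fun j => restrict (G j) v ≠ 0

lemma l1_nonneg {d : ℕ} (v : Fin d → ℝ) : 0 ≤ l1 v :=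
  sum_nonneg fun _ _ => abs_nonneg _

lemma l2_nonneg {d : ℕ} (v : Fin d → ℝ) : 0 ≤ l2 v :=
  Real.sqrt_nonneg _

lemma l1_restrict {d : ℕ} (Λ : Finset (Fin d)) (v : Fin d → ℝ) :
    l1 (restrict Λ v) = ∑ i ∈ Λ, |v i| := by
  simp only [l1, restrict, apply_ite, abs_zero, sum_ite_mem, univ_inter]

lemma l2_restrict {d : ℕ} (Λ : Finset (Fin d)) (v : Fin d → ℝ) :
    l2 (restrict Λ v) = √(∑ i ∈ Λ, v i ^ 2) := by
  simp only [l2, restrict, apply_ite (· ^ 2), ne_eq, OfNat.ofNat_ne_zero, not_false_eq_true,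
    zero_pow, sum_ite_mem, univ_inter]

lemma l2_eq_norm {d : ℕ} (v : Fin d → ℝ) : l2 v = ‖WithLp.toLp 2 v‖ := by
  simp [l2, EuclideanSpace.norm_eq]

lemma l2_sub_le {d : ℕ} (u v : Fin d → ℝ) : l2 (u - v) ≤ l2 u + l2 v := by
  simpa only [l2_eq_norm, WithLp.toLp_sub] using norm_sub_le (WithLp.toLp 2 u) (WithLp.toLp 2 v)

lemma l2_neg {d : ℕ} (v : Fin d → ℝ) : l2 (-v) = l2 v := by
  simp [l2]

theorem _root_.Real.rpow_sum_rpow_le_sum {ι : Type*} (s : Finset ι) {f : ι → ℝ}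
    (hf : ∀ i, 0 ≤ f i) {p : ℝ} (hp : 1 ≤ p) :
    (∑ i ∈ s, f i ^ p) ^ (1 / p) ≤ ∑ i ∈ s, f i := by
  classical
  induction s using Finset.induction_on with
  | empty => rw [sum_empty, sum_empty, Real.zero_rpow (one_div_pos.2 (zero_lt_one.trans_le hp)).ne']
  | insert a s ha ih =>
    have hS : 0 ≤ ∑ i ∈ s, f i ^ p := sum_nonneg fun i _ => Real.rpow_nonneg (hf i) p
    rw [sum_insert ha, sum_insert ha]
    calc (f a ^ p + ∑ i ∈ s, f i ^ p) ^ (1 / p)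
        = (f a ^ p + ((∑ i ∈ s, f i ^ p) ^ (1 / p)) ^ p) ^ (1 / p) := by
          rw [← Real.rpow_mul hS, one_div_mul_cancel (by positivity), Real.rpow_one]
      _ ≤ f a + (∑ i ∈ s, f i ^ p) ^ (1 / p) :=
          Real.rpow_add_rpow_le_add (hf a) (Real.rpow_nonneg hS _) hp
      _ ≤ f a + ∑ i ∈ s, f i := add_le_add_right ih _

theorem _root_.Real.rpow_sum_rpow_le_card_rpow_mul {ι : Type*} (s : Finset ι) {f : ι → ℝ}
    (hf : ∀ i, 0 ≤ f i) {p q : ℝ} (hp : 0 < p) (hpq : p ≤ q) :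
    (∑ i ∈ s, f i ^ p) ^ (1 / p) ≤ (#s : ℝ) ^ (1 / p - 1 / q) * (∑ i ∈ s, f i ^ q) ^ (1 / q) := by
  have hq : 0 < q := hp.trans_le hpq
  have holder := Real.inner_le_weight_mul_Lp_of_nonneg s ((one_le_div hp).2 hpq) (fun _ => 1)
    (fun i => f i ^ p) (fun _ => zero_le_one) (fun i => Real.rpow_nonneg (hf i) p)
  have hpow : ∀ i, (f i ^ p) ^ (q / p) = f i ^ q := fun i => by
    rw [← Real.rpow_mul (hf i), mul_div_cancel₀ q hp.ne']
  simp only [one_mul, sum_const, nsmul_eq_mul, mul_one, hpow, inv_div] at holder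
  have hT : 0 ≤ ∑ i ∈ s, f i ^ q := sum_nonneg fun i _ => Real.rpow_nonneg (hf i) q
  calc (∑ i ∈ s, f i ^ p) ^ (1 / p)
      ≤ ((#s : ℝ) ^ (1 - p / q) * (∑ i ∈ s, f i ^ q) ^ (p / q)) ^ (1 / p) :=
        Real.rpow_le_rpow (sum_nonneg fun i _ => Real.rpow_nonneg (hf i) p) holder (by positivity)
    _ = (#s : ℝ) ^ (1 / p - 1 / q) * (∑ i ∈ s, f i ^ q) ^ (1 / q) := by
        rw [Real.mul_rpow (by positivity) (by positivity), ← Real.rpow_mul (by positivity),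
          ← Real.rpow_mul hT]
        congr 2 <;> field_simp

lemma lpnorm_restrict {d : ℕ} {p : ℝ} (hp : p ≠ 0) (Λ : Finset (Fin d)) (v : Fin d → ℝ) :
    lpnorm p (restrict Λ v) = (∑ i ∈ Λ, |v i| ^ p) ^ (1 / p) := by
  simp only [lpnorm, restrict, apply_ite (fun t => |t| ^ p), abs_zero, Real.zero_rpow hp,
    sum_ite_mem, univ_inter]

lemma lpnorm_one {d : ℕ} (v : Fin d → ℝ) : lpnorm 1 v = l1 v := by
  simp [lpnorm, l1]

lemma lpnorm_le_l1 {d : ℕ} {p : ℝ} (hp : 1 ≤ p) (v : Fin d → ℝ) : lpnorm p v ≤ l1 v :=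
  Real.rpow_sum_rpow_le_sum univ (fun i => abs_nonneg (v i)) hp

lemma lpnorm_le_lpnorm_restrict_add_lpnorm_restrict_compl {d : ℕ} {p : ℝ} (hp : 1 ≤ p)
    (Λ : Finset (Fin d)) (v : Fin d → ℝ) :
    lpnorm p v ≤ lpnorm p (restrict Λ v) + lpnorm p (restrict Λᶜ v) := by
  have hp0 : 0 < p := zero_lt_one.trans_le hp
  rw [lpnorm_restrict hp0.ne', lpnorm_restrict hp0.ne', lpnorm, ← sum_add_sum_compl Λ]
  exact Real.rpow_add_le_add_rpow (sum_nonneg fun i _ => by positivity)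
    (sum_nonneg fun i _ => by positivity) (by positivity) ((div_le_one hp0).2 hp)

lemma lpnorm_restrict_le_rpow_mul_l2_restrict {d : ℕ} {p : ℝ} (hp : 0 < p) (hp2 : p ≤ 2)
    {Λ : Finset (Fin d)} {k : ℕ} (hΛ : #Λ ≤ k) (v : Fin d → ℝ) :
    lpnorm p (restrict Λ v) ≤ (k : ℝ) ^ (1 / p - 1 / 2) * l2 (restrict Λ v) := by
  have holder := Real.rpow_sum_rpow_le_card_rpow_mul Λ (fun i => abs_nonneg (v i)) hp hp2
  simp only [Real.rpow_two, sq_abs, ← Real.sqrt_eq_rpow] at holder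
  rw [lpnorm_restrict hp.ne', l2_restrict]
  refine holder.trans (mul_le_mul_of_nonneg_right ?_ (Real.sqrt_nonneg _))
  gcongr
  rw [sub_nonneg]
  gcongr

lemma l1_restrict_le_sqrt_mul_l2_restrict {d : ℕ} {Λ : Finset (Fin d)} {k : ℕ} (hΛ : #Λ ≤ k)
    (v : Fin d → ℝ) : l1 (restrict Λ v) ≤ √k * l2 (restrict Λ v) := by
  have h := lpnorm_restrict_le_rpow_mul_l2_restrict one_pos one_le_two hΛ v
  rwa [lpnorm_one, show (1 : ℝ) / 1 - 1 / 2 = 1 / 2 by norm_num, ← Real.sqrt_eq_rpow] at h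

lemma exists_gIndex_eq {n g : ℕ} (G : Fin g → Finset (Fin n)) (k : ℕ) (x : Fin n → ℝ) :
    ∃ Λ, GroupSparseSet G k Λ ∧ gIndex G k x = l1 (restrict Λᶜ x) := by
  set R := {r | ∃ Λ : Finset (Fin n), GroupSparseSet G k Λ ∧ r = l1 (restrict Λᶜ x)}
  have hR : R.Nonempty := ⟨_, ∅, ⟨⟨∅, by simp⟩, by simp⟩, rfl⟩
  have hfin : R.Finite := (Set.finite_range fun Λ : Finset (Fin n) => l1 (restrict Λᶜ x)).subset
    (by rintro r ⟨Λ, -, rfl⟩; exact ⟨Λ, rfl⟩)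
  exact hR.csInf_mem hfin

lemma l1_restrict_compl_sub_le {d : ℕ} (Λ : Finset (Fin d)) {u v : Fin d → ℝ}
    (huv : l1 u ≤ l1 v) :
    l1 (restrict Λᶜ (u - v)) ≤ l1 (restrict Λ (u - v)) + 2 * l1 (restrict Λᶜ v) := by
  have hΛ : ∑ i ∈ Λ, |v i| - ∑ i ∈ Λ, |u i| ≤ ∑ i ∈ Λ, |(u - v) i| := by
    rw [← sum_sub_distrib]
    exact sum_le_sum fun i _ => by simpa [abs_sub_comm] using abs_sub_abs_le_abs_sub (v i) (u i)
  have hΛc : ∑ i ∈ Λᶜ, |(u - v) i| ≤ ∑ i ∈ Λᶜ, |u i| + ∑ i ∈ Λᶜ, |v i| := by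
    rw [← sum_add_distrib]
    exact sum_le_sum fun i _ => abs_sub (u i) (v i)
  rw [l1, l1, ← sum_add_sum_compl Λ, ← sum_add_sum_compl Λ] at huv
  simp only [l1_restrict]
  linarith

lemma l2_mulVec_sub_le {m d : ℕ} (A : Matrix (Fin m) (Fin d) ℝ) {y : Fin m → ℝ} {ε : ℝ}
    {u v : Fin d → ℝ} (hu : l2 (A.mulVec u - y) ≤ ε) (hv : l2 (A.mulVec v - y) ≤ ε) :
    l2 (A.mulVec (u - v)) ≤ 2 * ε := by
  have h := l2_sub_le (A.mulVec u - y) (A.mulVec v - y)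
  rw [sub_sub_sub_cancel_right, ← Matrix.mulVec_sub] at h
  linarith

-- At `k = 0` the left side is `0` because `X / √0 = 0`.
lemma rpow_sub_half_mul_div_sqrt_le {k p X : ℝ} (hk : 0 ≤ k) (hX : 0 ≤ X) :
    k ^ (1 / p - 1 / 2) * (X / √k) ≤ X / k ^ (1 - 1 / p) := by
  rcases hk.eq_or_lt with rfl | hk
  · simp only [Real.sqrt_zero, div_zero, mul_zero]
    positivity
  · refine le_of_eq ?_
    rw [Real.sqrt_eq_rpow, div_eq_mul_inv X, div_eq_mul_inv X, ← Real.rpow_neg hk.le,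
      ← Real.rpow_neg hk.le, mul_left_comm, ← Real.rpow_add hk]
    ring_nf

namespace GRNSP

variable {m n g k : ℕ} {A : Matrix (Fin m) (Fin n) ℝ} {G : Fin g → Finset (Fin n)} {ρ τ : ℝ}
  {Λ : Finset (Fin n)}

lemma l2_restrict_le (hA : GRNSP A G k ρ τ) (hΛ : GroupSparseSet G k Λ) (h : Fin n → ℝ) :
    l2 (restrict Λ h) ≤ (ρ * l1 (restrict Λᶜ h) + τ * l2 (A.mulVec h)) / √k := by
  simpa only [add_div, div_mul_eq_mul_div] using hA h Λ hΛ

lemma l1_restrict_le (hA : GRNSP A G k ρ τ) (hΛ : GroupSparseSet G k Λ) (hρ : 0 ≤ ρ)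
    (hτ : 0 ≤ τ) (h : Fin n → ℝ) :
    l1 (restrict Λ h) ≤ ρ * l1 (restrict Λᶜ h) + τ * l2 (A.mulVec h) := by
  have hX : 0 ≤ ρ * l1 (restrict Λᶜ h) + τ * l2 (A.mulVec h) :=
    add_nonneg (mul_nonneg hρ (l1_nonneg _)) (mul_nonneg hτ (l2_nonneg _))
  calc l1 (restrict Λ h) ≤ √k * l2 (restrict Λ h) := l1_restrict_le_sqrt_mul_l2_restrict hΛ.2 h
    _ ≤ √k * ((ρ * l1 (restrict Λᶜ h) + τ * l2 (A.mulVec h)) / √k) :=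
        mul_le_mul_of_nonneg_left (hA.l2_restrict_le hΛ h) (Real.sqrt_nonneg _)
    _ ≤ ρ * l1 (restrict Λᶜ h) + τ * l2 (A.mulVec h) := by
        rcases (Real.sqrt_nonneg (k : ℝ)).eq_or_lt with hk | hk
        · rw [← hk, zero_mul]; exact hX
        · rw [mul_div_cancel₀ _ hk.ne']

lemma one_sub_mul_l1_restrict_compl_le (hA : GRNSP A G k ρ τ) (hΛ : GroupSparseSet G k Λ)
    (hρ : 0 ≤ ρ) (hτ : 0 ≤ τ) {h : Fin n → ℝ} {c : ℝ}
    (hcone : l1 (restrict Λᶜ h) ≤ l1 (restrict Λ h) + c) :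
    (1 - ρ) * l1 (restrict Λᶜ h) ≤ c + τ * l2 (A.mulVec h) := by
  linarith [hA.l1_restrict_le hΛ hρ hτ h]

lemma lpnorm_le (hA : GRNSP A G k ρ τ) (hΛ : GroupSparseSet G k Λ) (hρ : 0 ≤ ρ) (hτ : 0 ≤ τ)
    {p : ℝ} (hp1 : 1 ≤ p) (hp2 : p ≤ 2) (h : Fin n → ℝ) :
    lpnorm p h ≤ l1 (restrict Λᶜ h) +
      (ρ * l1 (restrict Λᶜ h) + τ * l2 (A.mulVec h)) / (k : ℝ) ^ (1 - 1 / p) := by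
  have hX : 0 ≤ ρ * l1 (restrict Λᶜ h) + τ * l2 (A.mulVec h) :=
    add_nonneg (mul_nonneg hρ (l1_nonneg _)) (mul_nonneg hτ (l2_nonneg _))
  have hΛp := lpnorm_restrict_le_rpow_mul_l2_restrict (zero_lt_one.trans_le hp1) hp2 hΛ.2 h
  have hΛcp := lpnorm_le_l1 hp1 (restrict Λᶜ h)
  have hNSP := mul_le_mul_of_nonneg_left (hA.l2_restrict_le hΛ h)
    (Real.rpow_nonneg (Nat.cast_nonneg k) (1 / p - 1 / 2))
  have hk := rpow_sub_half_mul_div_sqrt_le (p := p) (Nat.cast_nonneg k) hX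
  linarith [lpnorm_le_lpnorm_restrict_add_lpnorm_restrict_compl hp1 Λ h]

end GRNSP

theorem lp_error_bound_general {n m g k : ℕ}
    (G : Fin g → Finset (Fin n))
    (A : Matrix (Fin m) (Fin n) ℝ)
    (ρ τ : ℝ) (hρ0 : 0 < ρ) (hρ1 : ρ < 1) (hτ : 0 ≤ τ)
    (hA : GRNSP A G k ρ τ)
    (x : Fin n → ℝ) (η : Fin m → ℝ) (ε : ℝ) (hη : l2 η ≤ ε)
    (y : Fin m → ℝ) (hy : y = A.mulVec x + η)
    (xhat : Fin n → ℝ)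
    (hfeas : l2 (A.mulVec xhat - y) ≤ ε)
    (hopt : ∀ z : Fin n → ℝ, l2 (A.mulVec z - y) ≤ ε → l1 xhat ≤ l1 z) :
    ∀ p : ℝ, 1 ≤ p → p ≤ 2 →
      lpnorm p (xhat - x) ≤
        2 / (1 - ρ) *
          ((ρ / (k : ℝ) ^ (1 - 1 / p) + (1 + ρ)) * gIndex G k x +
            (1 / (k : ℝ) ^ (1 - 1 / p) + 2) * τ * ε) := by
  intro p hp1 hp2
  obtain ⟨Λ, hΛ, hσ⟩ := exists_gIndex_eq G k x
  have hε : 0 ≤ ε := (l2_nonneg η).trans hη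
  have hx_feas : l2 (A.mulVec x - y) ≤ ε := by rwa [hy, sub_add_cancel_left, l2_neg]
  have hE := l2_mulVec_sub_le A hfeas hx_feas
  have hL := hA.one_sub_mul_l1_restrict_compl_le hΛ hρ0.le hτ
    (l1_restrict_compl_sub_le Λ (hopt x hx_feas))
  have hlp := hA.lpnorm_le hΛ hρ0.le hτ hp1 hp2 (xhat - x)
  set K := (k : ℝ) ^ (1 - 1 / p)
  rw [div_eq_mul_one_div _ K] at hlp
  rw [hσ, div_eq_mul_one_div ρ K, div_mul_eq_mul_div, le_div_iff₀ (by linarith)]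
  have hlp' := mul_le_mul_of_nonneg_left hlp (by linarith : 0 ≤ 1 - ρ)
  have hL' := mul_le_mul_of_nonneg_left hL (by positivity : 0 ≤ 1 + ρ * (1 / K))
  have hE' := mul_le_mul_of_nonneg_left hE (by positivity : 0 ≤ (1 + 1 / K) * τ)
  have hρσ := mul_nonneg hρ0.le (l1_nonneg (restrict Λᶜ x))
  have hτε := mul_nonneg hτ hε
  linarith

/-- **ℓp error bounds, `p ∈ [1,2]`, under the group robust null
space property.** -/
theorem lp_error_bound {n m g k : ℕ}
    (G : Fin g → Finset (Fin n)) (hG : IsPartition G)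
    (hGk : ∀ j, (G j).card ≤ k)
    (A : Matrix (Fin m) (Fin n) ℝ)
    (ρ τ : ℝ) (hρ0 : 0 < ρ) (hρ1 : ρ < 1) (hτ : 0 ≤ τ)
    (hA : GRNSP A G k ρ τ)
    (x : Fin n → ℝ) (η : Fin m → ℝ) (ε : ℝ) (hη : l2 η ≤ ε)
    (y : Fin m → ℝ) (hy : y = A.mulVec x + η)
    (xhat : Fin n → ℝ)
    (hfeas : l2 (A.mulVec xhat - y) ≤ ε)
    (hopt : ∀ z : Fin n → ℝ, l2 (A.mulVec z - y) ≤ ε → l1 xhat ≤ l1 z) :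
    ∀ p : ℝ, 1 ≤ p → p ≤ 2 →
      lpnorm p (xhat - x) ≤
        2 / (1 - ρ) *
          ((ρ / (k : ℝ) ^ (1 - 1 / p) + (1 + ρ)) * gIndex G k x +
            (1 / (k : ℝ) ^ (1 - 1 / p) + 2) * τ * ε) :=
  lp_error_bound_general G A ρ τ hρ0 hρ1 hτ hA x η ε hη y hy xhat hfeas hopt

end CS
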